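/- arXiv:2501.02228 — 2 statements merged into one kernel-verified Lean document; each statement's English description precedes it below -/
import Mathlib

section
/- Let s_1 ≤ ... ≤ s_d be the eigenvalues of a positive definite d×d matrix Ω, and define g(λ) = Σ_{i=1}^d [ (d+1) log(s_i + λ) − (d/2 − 1) log s_i − (d/2 + 1) log(s_i + 2λ) ] for λ > 0. Then g attains a global minimum at some λ* satisfying s_1/d ≤ λ* ≤ s_d/d, and g'(λ*) = 0, i.e., Σ_{i=1}^d (λ*d − s_i)/((s_i + λ*)(s_i + 2λ*)) = 0. -/
open Set Filter Finset

/-- For eigenvalues s_1 ≤ ... ≤ s_d > 0 of a positive definite matrix,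
g(λ) = Σ_i [(d+1)log(s_i+λ) − (d/2−1)log s_i − (d/2+1)log(s_i+2λ)] attains a global
minimum over λ > 0 at some λ* with s_1/d ≤ λ* ≤ s_d/d, where g'(λ*) = 0, i.e.
Σ_i (λ*d − s_i)/((s_i+λ*)(s_i+2λ*)) = 0. -/
theorem optimal_lambda_gaussian {d : ℕ} (hd : 0 < d) (s : Fin d → ℝ)
    (hmono : Monotone s) (hpos : ∀ i, 0 < s i) :
    ∃ lstar : ℝ,
      s ⟨0, hd⟩ / (d : ℝ) ≤ lstar ∧
      lstar ≤ s ⟨d - 1, Nat.sub_lt hd one_pos⟩ / (d : ℝ) ∧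
      (∀ μ : ℝ, 0 < μ →
        (∑ i : Fin d, (((d : ℝ) + 1) * Real.log (s i + lstar)
            - ((d : ℝ) / 2 - 1) * Real.log (s i)
            - ((d : ℝ) / 2 + 1) * Real.log (s i + 2 * lstar)))
        ≤ ∑ i : Fin d, (((d : ℝ) + 1) * Real.log (s i + μ)
            - ((d : ℝ) / 2 - 1) * Real.log (s i)
            - ((d : ℝ) / 2 + 1) * Real.log (s i + 2 * μ))) ∧
      (∑ i : Fin d, (lstar * (d : ℝ) - s i) / ((s i + lstar) * (s i + 2 * lstar))) = 0 := by
  set i0 : Fin d := ⟨0, hd⟩ with hi0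
  set i1 : Fin d := ⟨d - 1, Nat.sub_lt hd one_pos⟩ with hi1
  have hdR : (0:ℝ) < d := Nat.cast_pos.mpr hd
  set g : ℝ → ℝ := fun l => ∑ i : Fin d, (((d : ℝ) + 1) * Real.log (s i + l)
      - ((d : ℝ) / 2 - 1) * Real.log (s i)
      - ((d : ℝ) / 2 + 1) * Real.log (s i + 2 * l)) with hg
  set a := s i0 / d with hadef
  set b := s i1 / d with hbdef
  have ha : 0 < a := div_pos (hpos i0) hdR
  have h01 : s i0 ≤ s i1 := hmono (Fin.le_def.mpr (Nat.zero_le _))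
  have hab : a ≤ b := div_le_div_of_nonneg_right h01 hdR.le
  -- derivative of g at any positive point
  have hderiv : ∀ l : ℝ, 0 < l → HasDerivAt g
      (∑ i : Fin d, (l * (d:ℝ) - s i) / ((s i + l) * (s i + 2 * l))) l := by
    intro l hl
    have key : HasDerivAt g
        (∑ i : Fin d, (((d:ℝ)+1) * (1/(s i + l)) - ((d:ℝ)/2+1) * (2/(s i + 2*l)))) l := by
      apply HasDerivAt.fun_sum
      intro i _
      have h1pos : 0 < s i + l := add_pos (hpos i) hl
      have h2pos : 0 < s i + 2*l := by linarith [hpos i]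
      have h1 : HasDerivAt (fun x => Real.log (s i + x)) (1/(s i + l)) l := by
        have := ((hasDerivAt_id l).const_add (s i)).log h1pos.ne'
        simpa using this
      have h2 : HasDerivAt (fun x => Real.log (s i + 2*x)) (2/(s i + 2*l)) l := by
        have := (((hasDerivAt_id l).const_mul (2:ℝ)).const_add (s i)).log h2pos.ne'
        simpa [div_eq_mul_inv, mul_comm] using this
      have := ((h1.const_mul ((d:ℝ)+1)).sub
          (hasDerivAt_const l (((d:ℝ)/2-1) * Real.log (s i)))).sub
          (h2.const_mul ((d:ℝ)/2+1))
      simpa [mul_comm, Pi.sub_def] using this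
    have heq : ∀ i : Fin d, (l*(d:ℝ) - s i)/((s i+l)*(s i+2*l))
        = ((d:ℝ)+1)*(1/(s i+l)) - ((d:ℝ)/2+1)*(2/(s i+2*l)) := by
      intro i
      have h1pos : 0 < s i + l := add_pos (hpos i) hl
      have h2pos : 0 < s i + 2*l := by linarith [hpos i]
      rw [mul_one_div, mul_div_assoc', div_sub_div _ _ h1pos.ne' h2pos.ne',
        div_eq_div_iff (by positivity) (by positivity)]
      ring
    rw [Finset.sum_congr rfl (fun i _ => heq i)]
    exact key
  have hcont : ∀ x : ℝ, 0 < x → ContinuousAt g x := fun x hx =>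
    (hderiv x hx).continuousAt
  -- g is nonincreasing to the left of a
  have key_lo : ∀ μ : ℝ, 0 < μ → μ ≤ a → g a ≤ g μ := by
    intro μ hμ hμa
    have hanti : AntitoneOn g (Icc μ a) := by
      apply antitoneOn_of_deriv_nonpos (convex_Icc μ a)
      · exact fun x hx => ((hcont x (hμ.trans_le hx.1)).continuousWithinAt)
      · intro x hx
        rw [interior_Icc] at hx
        exact ((hderiv x (hμ.trans hx.1)).differentiableAt).differentiableWithinAt
      · intro x hx
        rw [interior_Icc] at hx
        have hx0 : 0 < x := hμ.trans hx.1
        rw [(hderiv x hx0).deriv]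
        apply Finset.sum_nonpos
        intro i _
        have h1pos : 0 < s i + x := add_pos (hpos i) hx0
        have h2pos : 0 < s i + 2*x := by linarith [hpos i]
        apply div_nonpos_of_nonpos_of_nonneg _ (by positivity)
        have h0i : s i0 ≤ s i := hmono (Fin.le_def.mpr (Nat.zero_le _))
        have : x * d ≤ s i0 := by
          rw [hadef] at hμa
          calc x * d ≤ a * d := by nlinarith [hx.2, hdR]
          _ = s i0 := div_mul_cancel₀ _ hdR.ne'
        linarith
    exact hanti (left_mem_Icc.mpr hμa) (right_mem_Icc.mpr hμa) hμa
  -- g is nondecreasing to the right of b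
  have key_hi : ∀ μ : ℝ, b ≤ μ → g b ≤ g μ := by
    intro μ hbμ
    have hb0 : 0 < b := ha.trans_le hab
    have hmon : MonotoneOn g (Icc b μ) := by
      apply monotoneOn_of_deriv_nonneg (convex_Icc b μ)
      · exact fun x hx => ((hcont x (hb0.trans_le hx.1)).continuousWithinAt)
      · intro x hx
        rw [interior_Icc] at hx
        exact ((hderiv x (hb0.trans hx.1)).differentiableAt).differentiableWithinAt
      · intro x hx
        rw [interior_Icc] at hx
        have hx0 : 0 < x := hb0.trans hx.1
        rw [(hderiv x hx0).deriv]
        apply Finset.sum_nonneg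
        intro i _
        have h1pos : 0 < s i + x := add_pos (hpos i) hx0
        have h2pos : 0 < s i + 2*x := by linarith [hpos i]
        apply div_nonneg _ (by positivity)
        have h1i : s i ≤ s i1 := hmono (Fin.le_def.mpr (Nat.le_pred_of_lt i.isLt))
        have : s i1 ≤ x * d := by
          calc s i1 = b * d := (div_mul_cancel₀ _ hdR.ne').symm
          _ ≤ x * d := by nlinarith [hx.1, hdR]
        linarith
    exact hmon (left_mem_Icc.mpr hbμ) (right_mem_Icc.mpr hbμ) hbμ
  -- minimum on [a, b]
  have hcontOn : ContinuousOn g (Icc a b) :=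
    fun x hx => (hcont x (ha.trans_le hx.1)).continuousWithinAt
  obtain ⟨lstar, hmem, hmin⟩ :=
    isCompact_Icc.exists_isMinOn (Set.nonempty_Icc.mpr hab) hcontOn
  have hl0 : 0 < lstar := ha.trans_le hmem.1
  -- global minimality
  have hglob : ∀ μ : ℝ, 0 < μ → g lstar ≤ g μ := by
    intro μ hμ
    rcases le_or_gt μ a with h | h
    · exact (hmin (left_mem_Icc.mpr hab)).trans (key_lo μ hμ h)
    rcases le_or_gt μ b with h2 | h2
    · exact hmin ⟨h.le, h2⟩
    · exact (hmin (right_mem_Icc.mpr hab)).trans (key_hi μ h2.le)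
  -- derivative zero
  have hlocal : IsLocalMin g lstar := by
    filter_upwards [isOpen_Ioi.mem_nhds (show lstar ∈ Ioi (0:ℝ) from hl0)] with μ hμ
    exact hglob μ hμ
  have hdz : (∑ i : Fin d, (lstar * (d:ℝ) - s i) / ((s i + lstar) * (s i + 2 * lstar))) = 0 := by
    have := hlocal.deriv_eq_zero
    rwa [(hderiv lstar hl0).deriv] at this
  exact ⟨lstar, hmem.1, hmem.2, fun μ hμ => hglob μ hμ, hdz⟩
end

section
/- Suppose limsup_{‖x‖→∞} ‖prox_ψ^λ(x)‖/‖x‖ = l < 1 and 0 < h ≤ 2λ. Define c(x) = x − (h/2)∇ψ^λ(x) where ∇ψ^λ(x) = (x − prox_ψ^λ(x))/λ. Then liminf_{‖x‖→∞} (‖x‖ − ‖c(x)‖) > 0 (in fact it is +∞). -/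
open Set Filter

set_option maxHeartbeats 1000000

/-- If limsup_{‖x‖→∞} ‖prox_ψ^λ(x)‖/‖x‖ = l < 1 and 0 < h ≤ 2λ, then for
c(x) = x − (h/2)∇ψ^λ(x) with ∇ψ^λ(x) = (x − prox_ψ^λ(x))/λ, one has
liminf_{‖x‖→∞}(‖x‖ − ‖c(x)‖) > 0; in fact ‖x‖ − ‖c(x)‖ → +∞. -/
theorem mala_drift_gap {d : ℕ} (ψ : EuclideanSpace ℝ (Fin d) → ℝ)
    (hconvex : ConvexOn ℝ Set.univ ψ)
    (hclosed : LowerSemicontinuous ψ)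
    (lam : ℝ) (hlam : 0 < lam)
    (p : EuclideanSpace ℝ (Fin d) → EuclideanSpace ℝ (Fin d))
    (hp : ∀ x, IsMinOn (fun y : EuclideanSpace ℝ (Fin d) =>
      ψ y + 1 / (2 * lam) * ‖y - x‖ ^ 2) Set.univ (p x))
    (l : ℝ)
    (hlimsup : Filter.limsup (fun x : EuclideanSpace ℝ (Fin d) => ‖p x‖ / ‖x‖)
      (Filter.comap (fun x : EuclideanSpace ℝ (Fin d) => ‖x‖) Filter.atTop) = l)
    (hl : l < 1)
    (h : ℝ) (hh : 0 < h) (hh2 : h ≤ 2 * lam) :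
    Filter.Tendsto
      (fun x : EuclideanSpace ℝ (Fin d) =>
        ‖x‖ - ‖x - (h / 2) • (lam⁻¹ • (x - p x))‖)
      (Filter.comap (fun x : EuclideanSpace ℝ (Fin d) => ‖x‖) Filter.atTop)
      Filter.atTop := by
  set F := Filter.comap (fun x : EuclideanSpace ℝ (Fin d) => ‖x‖) Filter.atTop with hF
  rcases F.eq_or_neBot with hbot | hne
  · rw [hbot]; exact tendsto_bot
  set c0 : ℝ := 1 / (2 * lam) with hc0
  have hlam2 : (0:ℝ) < 2 * lam := by linarith
  have hc0pos : 0 < c0 := by positivity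
  -- subgradient inequality: 2 c0 ⟪x - p x, y - p x⟫ ≤ ψ y - ψ (p x)
  have hsub : ∀ x y : EuclideanSpace ℝ (Fin d),
      2 * c0 * inner ℝ (x - p x) (y - p x) ≤ ψ y - ψ (p x) := by
    intro x y
    set P := p x with hP
    set K : ℝ := ‖y - P‖ ^ 2 with hK
    have hK0 : 0 ≤ K := by positivity
    have step : ∀ t : ℝ, 0 < t → t ≤ 1 →
        2 * c0 * inner ℝ (x - P) (y - P) ≤ ψ y - ψ P + c0 * t * K := by
      intro t ht0 ht1
      have hmin := hp x (Set.mem_univ (P + t • (y - P)))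
      simp only at hmin
      have hconv : ψ (P + t • (y - P)) ≤ (1 - t) * ψ P + t * ψ y := by
        have := hconvex.2 (Set.mem_univ P) (Set.mem_univ y)
          (by linarith : (0:ℝ) ≤ 1 - t) ht0.le (by ring)
        have heq : (1 - t) • P + t • y = P + t • (y - P) := by module
        rw [heq] at this
        simpa [smul_eq_mul] using this
      have hsq : ‖t • (y - P)‖ ^ 2 = t ^ 2 * K := by
        rw [norm_smul, mul_pow, Real.norm_eq_abs, sq_abs, hK]
      have hnorm : ‖P + t • (y - P) - x‖ ^ 2
          = ‖P - x‖ ^ 2 + 2 * (t * inner ℝ (P - x) (y - P)) + t ^ 2 * K := by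
        have heq : P + t • (y - P) - x = (P - x) + t • (y - P) := by module
        rw [heq, norm_add_sq_real, real_inner_smul_right, hsq]
      have hin : inner ℝ (x - P) (y - P) = -(inner ℝ (P - x) (y - P) : ℝ) := by
        have : x - P = -(P - x) := by module
        rw [this, inner_neg_left]
      rw [hin]
      have key : ψ P + c0 * ‖P - x‖ ^ 2 ≤
          (1 - t) * ψ P + t * ψ y + c0 * (‖P - x‖ ^ 2 + 2 * (t * inner ℝ (P - x) (y - P)) + t ^ 2 * K) := by
        calc ψ P + c0 * ‖P - x‖ ^ 2
            ≤ ψ (P + t • (y - P)) + c0 * ‖P + t • (y - P) - x‖ ^ 2 := by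
              simpa using hmin
          _ ≤ _ := by rw [hnorm]; linarith
      -- divide by t
      nlinarith [key, ht0, sq_nonneg t]
    by_contra hcon
    push_neg at hcon
    set ε := 2 * c0 * inner ℝ (x - P) (y - P) - (ψ y - ψ P) with hε
    have hεpos : 0 < ε := by linarith
    have hden : 0 < c0 * K + 1 := by positivity
    set t := min 1 (ε / (2 * (c0 * K + 1))) with ht
    have ht0 : 0 < t := lt_min one_pos (by positivity)
    have ht1 : t ≤ 1 := min_le_left _ _
    have h2 := step t ht0 ht1
    have htle : t ≤ ε / (2 * (c0 * K + 1)) := min_le_right _ _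
    have : c0 * t * K ≤ ε / 2 := by
      have h3 : c0 * t * K ≤ (ε / (2 * (c0 * K + 1))) * (c0 * K) := by
        have := mul_le_mul_of_nonneg_right htle (by positivity : (0:ℝ) ≤ c0 * K)
        nlinarith
      have h4 : (ε / (2 * (c0 * K + 1))) * (c0 * K) ≤ ε / 2 := by
        rw [div_mul_eq_mul_div, div_le_div_iff₀ (by positivity) (by norm_num)]
        nlinarith
      linarith
    linarith
  -- nonexpansiveness of prox
  have hnonexp : ∀ x z : EuclideanSpace ℝ (Fin d), ‖p x - p z‖ ≤ ‖x - z‖ := by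
    intro x z
    have h1 := hsub x (p z)
    have h2 := hsub z (p x)
    have hmono : ‖p x - p z‖ ^ 2 ≤ inner ℝ (x - z) (p x - p z) := by
      have e1 : inner ℝ (x - p x) (p z - p x) + inner ℝ (z - p z) (p x - p z)
          = -(inner ℝ (x - z) (p x - p z) : ℝ) + ‖p x - p z‖ ^ 2 := by
        simp only [← real_inner_self_eq_norm_sq, inner_sub_left, inner_sub_right,
          real_inner_comm (p z) (p x)]
        ring
      nlinarith [h1, h2, hc0pos, e1]
    have hcs : inner ℝ (x - z) (p x - p z) ≤ ‖x - z‖ * ‖p x - p z‖ :=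
      real_inner_le_norm _ _
    nlinarith [norm_nonneg (p x - p z), norm_nonneg (x - z), hmono, hcs]
  set a := h / (2 * lam) with ha
  have ha0 : 0 < a := div_pos hh hlam2
  have ha1 : a ≤ 1 := (div_le_one hlam2).mpr hh2
  set m := (l + 1) / 2 with hm
  have hlm : l < m := by rw [hm]; linarith
  have hm1 : m < 1 := by rw [hm]; linarith
  have hnorm : Filter.Tendsto (fun x : EuclideanSpace ℝ (Fin d) => ‖x‖) F Filter.atTop := by
    rw [hF]; exact tendsto_comap
  have hbig : ∀ᶠ x in F, (1:ℝ) ≤ ‖x‖ := hnorm.eventually (eventually_ge_atTop 1)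
  have hbdd : Filter.IsBoundedUnder (· ≤ ·) F
      (fun x : EuclideanSpace ℝ (Fin d) => ‖p x‖ / ‖x‖) := by
    refine ⟨‖p 0‖ + 1, Filter.eventually_map.mpr ?_⟩
    filter_upwards [hbig] with x hx
    have hxpos : (0:ℝ) < ‖x‖ := lt_of_lt_of_le one_pos hx
    have : ‖p x‖ ≤ ‖p 0‖ + ‖x‖ := by
      have := hnonexp x 0
      have htri : ‖p x‖ ≤ ‖p x - p 0‖ + ‖p 0‖ := by
        calc ‖p x‖ = ‖(p x - p 0) + p 0‖ := by rw [sub_add_cancel]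
          _ ≤ ‖p x - p 0‖ + ‖p 0‖ := norm_add_le _ _
      simp only [sub_zero] at this
      linarith
    rw [div_le_iff₀ hxpos]
    nlinarith [norm_nonneg (p 0)]
  have hev : ∀ᶠ x in F, ‖p x‖ / ‖x‖ < m :=
    Filter.eventually_lt_of_limsup_lt (by rw [hlimsup]; exact hlm) hbdd
  have hkey : ∀ x : EuclideanSpace ℝ (Fin d),
      ‖x - (h / 2) • (lam⁻¹ • (x - p x))‖ ≤ (1 - a) * ‖x‖ + a * ‖p x‖ := by
    intro x
    have hx : x - (h / 2) • (lam⁻¹ • (x - p x)) = (1 - a) • x + a • p x := by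
      rw [smul_smul]
      have heq : h / 2 * lam⁻¹ = a := by
        rw [ha]; field_simp
      rw [heq]
      module
    rw [hx]
    calc ‖(1 - a) • x + a • p x‖ ≤ ‖(1 - a) • x‖ + ‖a • p x‖ := norm_add_le _ _
      _ = (1 - a) * ‖x‖ + a * ‖p x‖ := by
          rw [norm_smul, norm_smul]
          simp only [Real.norm_eq_abs]
          rw [abs_of_nonneg (by linarith : (0:ℝ) ≤ 1 - a), abs_of_nonneg ha0.le]
  have hlow : Filter.Tendsto (fun x : EuclideanSpace ℝ (Fin d) => a * (1 - m) * ‖x‖)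
      F Filter.atTop :=
    hnorm.const_mul_atTop (by nlinarith)
  refine Filter.tendsto_atTop_mono' F ?_ hlow
  filter_upwards [hev, hbig] with x hx1 hx2
  have hxpos : (0:ℝ) < ‖x‖ := lt_of_lt_of_le one_pos hx2
  have hpx : ‖p x‖ ≤ m * ‖x‖ := le_of_lt ((div_lt_iff₀ hxpos).mp hx1)
  have := hkey x
  nlinarith [ha0, hpx, this]
end
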